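/- arXiv:1202.0015 — 3 statements merged into one kernel-verified Lean document; each statement's English description precedes it below -/
import Mathlib

section
/- (Generalized Stein's identity) Let Y be an absolutely continuous real random variable with everywhere positive, differentiable density f_Y. Suppose there are functions k, t and a constant ν such that lim_{y→±∞} k(y) f_Y(y) = 0 and f_Y'(y)/f_Y(y) = −k'(y)/k(y) + (ν − t(y))/k(y) for all y. Then for every differentiable function r with E[|r(Y) t(Y)|] < ∞, E[r(Y)²] < ∞ and E[|k(Y) r'(Y)|] < ∞, one has E[r(Y)(t(Y) − ν)] = E[r'(Y) k(Y)]. -/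
/-!
With `g = k f_Y` the score equation says `g' = (ν - t) f_Y`, so the identity is the integration by
parts `∫ r g' = -∫ r' g`. As `(r g)'` is integrable, `r g` has limits at `±∞`. A nonzero limit would
make `g'/g = (r g') / (r g)` integrable near that end, so `log |g|` would converge there,
contradicting `g → 0`. Hence the boundary terms vanish.
-/

open MeasureTheory Filter Set Topology

theorem MeasureTheory.IntegrableAtFilter.of_mul_of_tendsto {l : Filter ℝ}
    [l.IsMeasurablyGenerated] {h q : ℝ → ℝ} {a : ℝ} (ha : a ≠ 0) (hh : Tendsto h l (𝓝 a))
    (hq : AEStronglyMeasurable q) (hhq : IntegrableAtFilter (fun y => h y * q y) l) :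
    IntegrableAtFilter q l := by
  obtain ⟨s, hs, hint⟩ := hhq
  have hbig : ∀ᶠ y in l, |a| / 2 < |h y| :=
    hh.abs.eventually (lt_mem_nhds (half_lt_self (abs_pos.mpr ha)))
  obtain ⟨t, ht, ht_meas, hbig_t⟩ := hbig.exists_measurable_mem
  refine ⟨s ∩ t, inter_mem hs ht, ?_⟩
  refine ((hint.mono_set inter_subset_left).norm.const_mul (2 / |a|)).mono'
    hq.restrict ?_
  filter_upwards [ae_restrict_of_ae_restrict_of_subset inter_subset_right
    (ae_restrict_of_forall_mem ht_meas hbig_t)] with y hy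
  rw [Real.norm_eq_abs, Real.norm_eq_abs, abs_mul, ← mul_assoc]
  have : 1 ≤ 2 / |a| * |h y| := by
    rw [div_mul_eq_mul_div, le_div_iff₀ (abs_pos.mpr ha)]; linarith
  nlinarith [abs_nonneg (q y)]

theorem not_integrableAtFilter_logDeriv_atTop {g : ℝ → ℝ} (hg : Differentiable ℝ g)
    (hg_ne : ∀ y, g y ≠ 0) (hg_lim : Tendsto g atTop (𝓝 0)) :
    ¬ IntegrableAtFilter (logDeriv g) atTop := by
  intro hint
  obtain ⟨c, hc⟩ := integrableAtFilter_atTop_iff.mp hint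
  -- `Real.log x = log |x|`, so `log ∘ g` is a primitive of `g'/g` whatever the sign of `g`.
  have hlog_lim := tendsto_limUnder_of_hasDerivAt_of_integrableOn_Ioi
    (fun y _ => ((hg y).hasDerivAt.log (hg_ne y))) (hc.mono_set Ioi_subset_Ici_self)
  have hlog_bot : Tendsto (fun y => Real.log (g y)) atTop atBot :=
    Real.tendsto_log_nhdsNE_zero.comp
      (tendsto_nhdsWithin_of_tendsto_nhds_of_eventually_within _ hg_lim (.of_forall hg_ne))
  exact not_tendsto_nhds_of_tendsto_atBot hlog_bot _ hlog_lim

theorem not_integrableAtFilter_logDeriv_atBot {g : ℝ → ℝ} (hg : Differentiable ℝ g)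
    (hg_ne : ∀ y, g y ≠ 0) (hg_lim : Tendsto g atBot (𝓝 0)) :
    ¬ IntegrableAtFilter (logDeriv g) atBot := by
  intro hint
  obtain ⟨c, hc⟩ := integrableAtFilter_atBot_iff.mp hint
  have hlog_lim := tendsto_limUnder_of_hasDerivAt_of_integrableOn_Iic
    (fun y _ => ((hg y).hasDerivAt.log (hg_ne y))) hc
  have hlog_bot : Tendsto (fun y => Real.log (g y)) atBot atBot :=
    Real.tendsto_log_nhdsNE_zero.comp
      (tendsto_nhdsWithin_of_tendsto_nhds_of_eventually_within _ hg_lim (.of_forall hg_ne))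
  exact not_tendsto_nhds_of_tendsto_atBot hlog_bot _ hlog_lim

theorem integral_mul_deriv_eq_neg_integral_deriv_mul_of_tendsto_zero {u g : ℝ → ℝ}
    (hu : Differentiable ℝ u) (hg : Differentiable ℝ g) (hg_ne : ∀ y, g y ≠ 0)
    (hg_top : Tendsto g atTop (𝓝 0)) (hg_bot : Tendsto g atBot (𝓝 0))
    (hu'g : Integrable (fun y => deriv u y * g y))
    (hug' : Integrable (fun y => u y * deriv g y)) :
    ∫ y, u y * deriv g y = -∫ y, deriv u y * g y := by
  have hderiv : ∀ y, HasDerivAt (u * g) (deriv u y * g y + u y * deriv g y) y :=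
    fun y => (hu y).hasDerivAt.mul (hg y).hasDerivAt
  have hlog : Integrable (fun y => (u * g) y * logDeriv g y) :=
    hug'.congr (.of_forall fun y => by
      simp only [Pi.mul_apply, logDeriv_apply]; field_simp [hg_ne y])
  have hlog_meas : AEStronglyMeasurable (logDeriv g) :=
    ((measurable_deriv g).div hg.continuous.measurable).aestronglyMeasurable
  have htop : Tendsto (u * g) atTop (𝓝 0) := by
    have hlim := tendsto_limUnder_of_hasDerivAt_of_integrableOn_Ioi (a := 0)
      (fun y _ => hderiv y) (hu'g.add hug').integrableOn
    convert hlim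
    by_contra hne
    exact not_integrableAtFilter_logDeriv_atTop hg hg_ne hg_top
      ((hlog.integrableAtFilter atTop).of_mul_of_tendsto (Ne.symm hne) hlim hlog_meas)
  have hbot : Tendsto (u * g) atBot (𝓝 0) := by
    have hlim := tendsto_limUnder_of_hasDerivAt_of_integrableOn_Iic (a := 0)
      (fun y _ => hderiv y) (hu'g.add hug').integrableOn
    convert hlim
    by_contra hne
    exact not_integrableAtFilter_logDeriv_atBot hg hg_ne hg_bot
      ((hlog.integrableAtFilter atBot).of_mul_of_tendsto (Ne.symm hne) hlim hlog_meas)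
  simpa using integral_mul_deriv_eq_deriv_mul (fun y _ => (hu y).hasDerivAt)
    (fun y _ => (hg y).hasDerivAt) hug' hu'g hbot htop

theorem deriv_mul_eq_of_logDeriv_eq {𝕜 : Type*} [NontriviallyNormedField 𝕜] {k f : 𝕜 → 𝕜}
    {x s : 𝕜} (hk : DifferentiableAt 𝕜 k x) (hf : DifferentiableAt 𝕜 f x) (hkx : k x ≠ 0)
    (hfx : f x ≠ 0) (h : logDeriv f x = -logDeriv k x + s / k x) :
    deriv (fun y => k y * f y) x = s * f x := by
  rw [logDeriv_apply, logDeriv_apply, div_eq_iff hfx] at h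
  rw [deriv_fun_mul hk hf, h]
  field_simp
  ring

theorem integrable_mul_of_integrable_sq_mul {α : Type*} [MeasurableSpace α] {μ : Measure α}
    {f w : α → ℝ} (hw_nonneg : 0 ≤ w) (hw : Integrable w μ)
    (hf2w : Integrable (fun x => f x ^ 2 * w x) μ)
    (hfw : AEStronglyMeasurable (fun x => f x * w x) μ) :
    Integrable (fun x => f x * w x) μ := by
  refine ((hw.add hf2w).div_const 2).mono' hfw (.of_forall fun x => ?_)
  have hwx : 0 ≤ w x := hw_nonneg x
  rw [Real.norm_eq_abs, abs_mul, abs_of_nonneg hwx, Pi.add_apply]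
  nlinarith [sq_nonneg (|f x| - 1), sq_abs (f x)]

/-- **Generalized Stein's identity.** If the everywhere positive differentiable
density `fY` of `Y` satisfies `fY'/fY = -k'/k + (ν - t)/k` and `k·fY` vanishes
at `±∞`, then `E[r(Y)(t(Y) - ν)] = E[r'(Y) k(Y)]` for every differentiable `r`
with the stated integrability properties. -/
theorem generalized_stein_identity
    (fY k t r : ℝ → ℝ) (ν : ℝ)
    (hfY_pos : ∀ y, 0 < fY y)
    (hfY_diff : Differentiable ℝ fY)
    (hfY_prob : (∫ y, fY y) = 1)
    (hk_diff : Differentiable ℝ k)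
    (hk_ne : ∀ y, k y ≠ 0)
    (hlim_top : Tendsto (fun y => k y * fY y) atTop (nhds 0))
    (hlim_bot : Tendsto (fun y => k y * fY y) atBot (nhds 0))
    (hscore : ∀ y, deriv fY y / fY y = -(deriv k y / k y) + (ν - t y) / k y)
    (hr_diff : Differentiable ℝ r)
    (h1 : Integrable (fun y => r y * t y * fY y))
    (h2 : Integrable (fun y => (r y) ^ 2 * fY y))
    (h3 : Integrable (fun y => k y * deriv r y * fY y)) :
    (∫ y, r y * (t y - ν) * fY y) = ∫ y, deriv r y * k y * fY y := by
  have hderiv : deriv (fun y => k y * fY y) = fun y => (ν - t y) * fY y := funext fun y =>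
    deriv_mul_eq_of_logDeriv_eq (hk_diff y) (hfY_diff y) (hk_ne y) (hfY_pos y).ne' (hscore y)
  have hrfY : Integrable (fun y => r y * fY y) :=
    integrable_mul_of_integrable_sq_mul (fun y => (hfY_pos y).le)
      (.of_integral_ne_zero (by rw [hfY_prob]; exact one_ne_zero)) h2
      (hr_diff.continuous.mul hfY_diff.continuous).aestronglyMeasurable
  have hrg' : Integrable (fun y => r y * ((ν - t y) * fY y)) :=
    ((hrfY.const_mul ν).sub h1).congr (.of_forall fun y => by simp only [Pi.sub_apply]; ring)
  have hibp := integral_mul_deriv_eq_neg_integral_deriv_mul_of_tendsto_zero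
    (g := fun y => k y * fY y) hr_diff (hk_diff.mul hfY_diff)
    (fun y => mul_ne_zero (hk_ne y) (hfY_pos y).ne') hlim_top hlim_bot
    (h3.congr (.of_forall fun y => by ring)) (by rwa [hderiv])
  rw [hderiv] at hibp
  calc (∫ y, r y * (t y - ν) * fY y) = -∫ y, r y * ((ν - t y) * fY y) := by
        rw [← integral_neg]; congr 1 with y; ring
    _ = ∫ y, deriv r y * k y * fY y := by
        rw [hibp, neg_neg]; congr 1 with y; ring
end

section
/- (Score of the output density, a-derivative) For every a > 0 and y ∈ ℝ, the output density of the additive Gaussian noise channel satisfies ∂/∂a log f_Y(y;a) = (1/(2a²)) · ( ∫ (y−x)² f_X(x) φ_a(y−x) dx / f_Y(y;a) − a ), where φ_a(u) = (2πa)^{−1/2} exp(−u²/(2a)). -/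
/-!
The Gaussian kernel `φ_a(u)` solves the heat equation in the form
`∂φ_a(u)/∂a = (u² - a) / (2a²) · φ_a(u)`. For `a` near `a₀ > 0` this derivative is dominated by
a fixed multiple of `1 + u²`, so, `X` having a finite second moment, one may differentiate
`f_Y(y;a) = ∫ f_X(x) φ_a(y - x) dx` under the integral sign. Since `f_Y(y;a) > 0`, the chain rule
for `log` gives the formula.
-/

open MeasureTheory Filter Real Topology

noncomputable def gaussKernel (a u : ℝ) : ℝ :=
  (√(2 * π * a))⁻¹ * exp (-u ^ 2 / (2 * a))

lemma gaussKernel_nonneg (a u : ℝ) : 0 ≤ gaussKernel a u := by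
  unfold gaussKernel; positivity

lemma gaussKernel_pos {a : ℝ} (ha : 0 < a) (u : ℝ) : 0 < gaussKernel a u := by
  have : 0 < 2 * π * a := by positivity
  unfold gaussKernel; positivity

lemma gaussKernel_le {a : ℝ} (ha : 0 ≤ a) (u : ℝ) :
    gaussKernel a u ≤ (√(2 * π * a))⁻¹ := by
  have hexp : exp (-u ^ 2 / (2 * a)) ≤ 1 := by
    rw [exp_le_one_iff, neg_div]
    exact neg_nonpos.mpr (div_nonneg (sq_nonneg u) (by positivity))
  exact mul_le_of_le_one_right (by positivity) hexp

@[fun_prop]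
lemma continuous_gaussKernel (a : ℝ) : Continuous (gaussKernel a) := by
  unfold gaussKernel; fun_prop

lemma hasDerivAt_gaussKernel (u : ℝ) {b : ℝ} (hb : 0 < b) :
    HasDerivAt (fun t => gaussKernel t u) ((u ^ 2 - b) / (2 * b ^ 2) * gaussKernel b u) b := by
  have h2πb : 0 < 2 * π * b := by positivity
  have hsqrt : HasDerivAt (fun t => √(2 * π * t)) (2 * π / (2 * √(2 * π * b))) b :=
    ((hasDerivAt_id b).const_mul (2 * π)).sqrt (by simp only [id]; exact h2πb.ne')
      |>.congr_deriv (by simp)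
  have hexponent : HasDerivAt (fun t => -u ^ 2 / (2 * t)) (u ^ 2 / (2 * b ^ 2)) b := by
    rw [show (fun t => -u ^ 2 / (2 * t)) = fun t => -u ^ 2 / 2 * t⁻¹ by funext t; ring]
    exact ((hasDerivAt_inv hb.ne').const_mul _).congr_deriv (by ring)
  refine ((hsqrt.inv (sqrt_pos.mpr h2πb).ne').mul hexponent.exp).congr_deriv ?_
  have hsq : √(2 * π * b) ^ 2 = 2 * π * b := sq_sqrt h2πb.le
  unfold gaussKernel
  simp only [Pi.inv_apply]
  rw [hsq]
  field_simp
  ring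

lemma abs_deriv_gaussKernel_le {a b : ℝ} (ha : 0 < a) (hb : a / 2 < b) (u : ℝ) :
    |(u ^ 2 - b) / (2 * b ^ 2) * gaussKernel b u| ≤
      (√(π * a))⁻¹ * (2 * u ^ 2 / a ^ 2 + 1 / a) := by
  have hb0 : 0 < b := by linarith
  have hfactor : |(u ^ 2 - b) / (2 * b ^ 2)| ≤ 2 * u ^ 2 / a ^ 2 + 1 / a := by
    have hsq : u ^ 2 / (2 * b ^ 2) ≤ 2 * u ^ 2 / a ^ 2 := by
      rw [div_le_div_iff₀ (by positivity) (by positivity)]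
      nlinarith [sq_nonneg u,
        mul_pos (by linarith : 0 < b - a / 2) (by linarith : 0 < b + a / 2)]
    have hinv : 1 / (2 * b) ≤ 1 / a := by
      rw [div_le_div_iff₀ (by positivity) (by positivity)]; linarith
    have hsplit : (u ^ 2 - b) / (2 * b ^ 2) = u ^ 2 / (2 * b ^ 2) - 1 / (2 * b) := by
      field_simp
    rw [hsplit, abs_le]
    constructor <;> nlinarith [div_nonneg (sq_nonneg u) (by positivity : 0 ≤ 2 * b ^ 2),
      div_nonneg zero_le_one (by positivity : 0 ≤ 2 * b)]
  have hkernel : gaussKernel b u ≤ (√(π * a))⁻¹ :=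
    (gaussKernel_le hb0.le u).trans
      (inv_anti₀ (sqrt_pos.mpr (by positivity)) (sqrt_le_sqrt (by nlinarith [pi_pos])))
  rw [abs_mul, abs_of_nonneg (gaussKernel_nonneg b u), mul_comm]
  exact mul_le_mul hkernel hfactor (abs_nonneg _) (by positivity)

section Convolution

variable {f : ℝ → ℝ}

lemma MeasureTheory.Integrable.sub_sq_mul (hf : Integrable f)
    (hf2 : Integrable fun x => x ^ 2 * f x) (y : ℝ) :
    Integrable fun x => (y - x) ^ 2 * f x := by
  refine Integrable.mono' ((hf.norm.const_mul (2 * y ^ 2)).add (hf2.norm.const_mul 2))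
    (by fun_prop) (Eventually.of_forall fun x => ?_)
  simp only [Pi.add_apply, norm_mul, norm_pow, Real.norm_eq_abs, sq_abs]
  nlinarith [sq_nonneg (y + x), abs_nonneg (f x)]

lemma integrable_mul_gaussKernel (hf : Integrable f) {a : ℝ} (ha : 0 ≤ a) (y : ℝ) :
    Integrable fun x => f x * gaussKernel a (y - x) :=
  hf.mul_bdd (by fun_prop) <| Eventually.of_forall fun x => by
    rw [Real.norm_eq_abs, abs_of_nonneg (gaussKernel_nonneg a _)]
    exact gaussKernel_le ha _

lemma integrable_sub_sq_mul_gaussKernel (hf : Integrable f)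
    (hf2 : Integrable fun x => x ^ 2 * f x) {a : ℝ} (ha : 0 ≤ a) (y : ℝ) :
    Integrable fun x => (y - x) ^ 2 * f x * gaussKernel a (y - x) :=
  (hf.sub_sq_mul hf2 y).mul_bdd (by fun_prop) <|
    Eventually.of_forall fun x => by
      rw [Real.norm_eq_abs, abs_of_nonneg (gaussKernel_nonneg a _)]
      exact gaussKernel_le ha _

theorem hasDerivAt_integral_mul_gaussKernel (hf : Integrable f)
    (hf2 : Integrable fun x => x ^ 2 * f x) (y : ℝ) {a : ℝ} (ha : 0 < a) :
    HasDerivAt (fun b => ∫ x, f x * gaussKernel b (y - x))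
      (((∫ x, (y - x) ^ 2 * f x * gaussKernel a (y - x)) - a * ∫ x, f x * gaussKernel a (y - x))
        / (2 * a ^ 2)) a := by
  set C := (√(π * a))⁻¹
  have hderiv := hasDerivAt_integral_of_dominated_loc_of_deriv_le
    (F := fun b x => f x * gaussKernel b (y - x))
    (F' := fun b x => f x * (((y - x) ^ 2 - b) / (2 * b ^ 2) * gaussKernel b (y - x)))
    (bound := fun x => 2 * C / a ^ 2 * ‖(y - x) ^ 2 * f x‖ + C / a * ‖f x‖)
    (Metric.ball_mem_nhds a (half_pos ha))
    (Eventually.of_forall fun b => by fun_prop)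
    (integrable_mul_gaussKernel hf ha.le y)
    (by fun_prop)
    (Eventually.of_forall fun x b hb => ?bound)
    (((hf.sub_sq_mul hf2 y).norm.const_mul _).add (hf.norm.const_mul _))
    (Eventually.of_forall fun x b hb => ?diff)
  case bound =>
    rw [Metric.mem_ball, Real.dist_eq, abs_lt] at hb
    rw [norm_mul, Real.norm_eq_abs, Real.norm_eq_abs]
    calc |f x| * |((y - x) ^ 2 - b) / (2 * b ^ 2) * gaussKernel b (y - x)|
        ≤ |f x| * (C * (2 * (y - x) ^ 2 / a ^ 2 + 1 / a)) :=
          mul_le_mul_of_nonneg_left (abs_deriv_gaussKernel_le ha (by linarith) (y - x))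
            (abs_nonneg _)
      _ = 2 * C / a ^ 2 * ‖(y - x) ^ 2 * f x‖ + C / a * ‖f x‖ := by
        simp only [norm_mul, norm_pow, Real.norm_eq_abs, sq_abs]; ring
  case diff =>
    rw [Metric.mem_ball, Real.dist_eq, abs_lt] at hb
    exact (hasDerivAt_gaussKernel (y - x) (by linarith)).const_mul (f x)
  refine hderiv.2.congr_deriv ?_
  have hintegrand : (fun x => f x * (((y - x) ^ 2 - a) / (2 * a ^ 2) * gaussKernel a (y - x))) =
      fun x => (2 * a ^ 2)⁻¹ * ((y - x) ^ 2 * f x * gaussKernel a (y - x)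
        - a * (f x * gaussKernel a (y - x))) := by
    funext x; field_simp
  rw [hintegrand, integral_const_mul,
    integral_sub (integrable_sub_sq_mul_gaussKernel hf hf2 ha.le y)
      ((integrable_mul_gaussKernel hf ha.le y).const_mul a),
    integral_const_mul, inv_mul_eq_div]

lemma integral_mul_gaussKernel_pos (hf0 : 0 ≤ f) (hf : Integrable f) (hpos : 0 < ∫ x, f x)
    (y : ℝ) {a : ℝ} (ha : 0 < a) : 0 < ∫ x, f x * gaussKernel a (y - x) := by
  have hsupport : Function.support (fun x => f x * gaussKernel a (y - x)) = Function.support f := by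
    ext x; simp [(gaussKernel_pos ha (y - x)).ne']
  rw [integral_pos_iff_support_of_nonneg hf0 hf] at hpos
  rwa [integral_pos_iff_support_of_nonneg (fun x => mul_nonneg (hf0 x) (gaussKernel_nonneg a _))
    (integrable_mul_gaussKernel hf ha.le y), hsupport]

end Convolution

/-- **Score of the output density with respect to the parameter `a`.**
For the additive Gaussian noise channel,
`∂/∂a log f_Y(y;a) = (1/(2a²))·(E_X[(y−X)² φ_a(y−X)]/f_Y(y;a) − a)`. -/
theorem output_score_a_derivative
    (fX : ℝ → ℝ)
    (hfX_nonneg : ∀ x, 0 ≤ fX x)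
    (hfX_prob : (∫ x, fX x) = 1)
    (hfX_mom : Integrable (fun x => x ^ 2 * fX x))
    (phi : ℝ → ℝ → ℝ)
    (hphi : ∀ a u, phi a u =
      (Real.sqrt (2 * Real.pi * a))⁻¹ * Real.exp (-u ^ 2 / (2 * a)))
    (fY : ℝ → ℝ → ℝ)
    (hfY : ∀ a, 0 < a → ∀ y, fY a y = ∫ x, fX x * phi a (y - x)) :
    ∀ a, 0 < a → ∀ y : ℝ,
      deriv (fun b => Real.log (fY b y)) a =
        (1 / (2 * a ^ 2)) *
          ((∫ x, (y - x) ^ 2 * fX x * phi a (y - x)) / fY a y - a) := by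
  intro a ha y
  obtain rfl : phi = gaussKernel := funext fun b => funext (hphi b)
  have hfX : Integrable fX := Integrable.of_integral_ne_zero (by simp [hfX_prob])
  have hfY_pos := integral_mul_gaussKernel_pos hfX_nonneg hfX (by simp [hfX_prob]) y ha
  have hfY_near : (fun b => log (fY b y)) =ᶠ[𝓝 a]
      fun b => log (∫ x, fX x * gaussKernel b (y - x)) := by
    filter_upwards [eventually_gt_nhds ha] with b hb
    rw [hfY b hb y]
  rw [hfY_near.deriv_eq, ((hasDerivAt_integral_mul_gaussKernel hfX hfX_mom y ha).log
    hfY_pos.ne').deriv, hfY a ha y]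
  field_simp
end

section
/- (Generalized heat-type equation for scaled noise densities) Let f_W : ℝ → ℝ be continuously differentiable and for a > 0, x, y ∈ ℝ set p(y, x, a) = a^{−1/2} f_W((y−x)/√a). Then for all a > 0, x, y ∈ ℝ, ∂/∂a p(y, x, a) = −(1/(2a)) · ∂/∂y ( (y−x) · p(y, x, a) ). -/
/-!
Write `t = a^{-1/2}` and `u = (y - x) t`, so that `p = t f(u)`. Differentiating `t f(z t)` in `t`
and `(y - x) t f((y - x) t)` in `y` both produce the factor `f u + u f'(u)`, the latter times `t`;
since `dt/da = -(1/(2a)) t`, both sides equal `-(1/(2a)) t (f u + u f'(u))`.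
-/

section ScaledDensity

variable {𝕜 : Type*} [NontriviallyNormedField 𝕜] {f : 𝕜 → 𝕜} {f' : 𝕜}

theorem hasDerivAt_mul_comp_const_mul {z t : 𝕜} (hf : HasDerivAt f f' (z * t)) :
    HasDerivAt (fun s => s * f (z * s)) (f (z * t) + z * t * f') t :=
  ((hasDerivAt_id t).mul (hf.comp t (hasDerivAt_const_mul z))).congr_deriv
    (by simp only [id, Function.comp_apply]; ring)

theorem hasDerivAt_sub_mul_mul_comp_sub_mul {x y t : 𝕜} (hf : HasDerivAt f f' ((y - x) * t)) :
    HasDerivAt (fun y => (y - x) * (t * f ((y - x) * t)))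
      (t * (f ((y - x) * t) + (y - x) * t * f')) y := by
  have hshift : HasDerivAt (fun y => y - x) 1 y := (hasDerivAt_id y).sub_const x
  have hinner : HasDerivAt (fun y => (y - x) * t) t y := (hshift.mul_const t).congr_deriv (one_mul t)
  exact (hshift.mul ((hf.comp y hinner).const_mul t)).congr_deriv
    (by simp only [Function.comp_apply]; ring)

end ScaledDensity

theorem Real.hasDerivAt_inv_sqrt {a : ℝ} (ha : 0 < a) :
    HasDerivAt (fun b => (√b)⁻¹) (-(1 / (2 * a)) * (√a)⁻¹) a := by
  have hs : √a ≠ 0 := (Real.sqrt_pos.mpr ha).ne'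
  refine ((Real.hasDerivAt_sqrt ha.ne').inv hs).congr_deriv ?_
  rw [Real.sq_sqrt ha.le]
  field_simp

/-- **Generalized heat-type equation for scaled noise densities.**
For a continuously differentiable noise density `f_W` and
`p(y,x,a) = a^{-1/2} f_W((y−x)/√a)`, one has
`∂/∂a p(y,x,a) = −(1/(2a)) ∂/∂y ((y−x)·p(y,x,a))`. -/
theorem heat_type_equation_scaled_noise
    (fW : ℝ → ℝ) (hfW : ContDiff ℝ 1 fW)
    (p : ℝ → ℝ → ℝ → ℝ)
    (hp : ∀ y x b, p y x b = (Real.sqrt b)⁻¹ * fW ((y - x) / Real.sqrt b)) :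
    ∀ a, 0 < a → ∀ x y : ℝ,
      deriv (fun b => p y x b) a =
        -(1 / (2 * a)) * deriv (fun y' => (y' - x) * p y' x a) y := by
  intro a ha x y
  have hp' : ∀ y x b, p y x b = (√b)⁻¹ * fW ((y - x) * (√b)⁻¹) := fun y x b => by
    rw [hp, div_eq_mul_inv]
  have hf := ((hfW.differentiable one_ne_zero) ((y - x) * (√a)⁻¹)).hasDerivAt
  have hscale := (hasDerivAt_mul_comp_const_mul hf).comp a (Real.hasDerivAt_inv_sqrt ha)
  rw [Function.comp_def] at hscale
  simp only [hp']
  rw [hscale.deriv, (hasDerivAt_sub_mul_mul_comp_sub_mul hf).deriv]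
  ring
end
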